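/- Define, for (t,x) ∈ [0,1]×ℝ: V₁(t,x) = e^{3−3t}(1+x²)^{-1}, k₁⁺(t,x) = e^{3−3t}(3x⁴+5)(1+x²)^{-3}, k₁⁻ = 0, with obstacles V̲₁(t,x) = e^{3−3t}(1+x²)^{-1}, V̄₁(t,x) = e⁴(1+x²)^{-1}; and V₂(t,x) = e^{3t−3}(1+x²)^{-1}, k₂⁺ = 0, k₂⁻(t,x) = e^{3t−3}(3x⁴+12x²+1)(1+x²)^{-3}, with obstacles V̲₂ = 0, V̄₂(t,x) = e^{3t−3}(1+x²)^{-1}. Then for all (t,x) ∈ [0,1]×ℝ: ∂_t V₁(t,x) + ∂²_{xx} V₁(t,x) + k₁⁺(t,x) = 0 and ∂_t V₂(t,x) + ∂²_{xx} V₂(t,x) − k₂⁻(t,x) = 0; V̲₁ ≤ V₁ ≤ V̄₁ and V̲₂ ≤ V₂ ≤ V̄₂; k₁⁺ ≥ 0 and k₂⁻ ≥ 0; the complementarity conditions (V₁ − V̲₁)k₁⁺ = 0, (V̄₁ − V₁)k₁⁻ = 0, (V₂ − V̲₂)k₂⁺ = 0, (V̄₂ − V₂)k₂⁻ = 0 hold.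 Moreover, although the data are ordered (both free terms are 0, V₁(1,·) ≥ V₂(1,·), V̲₁ ≥ V̲₂ and V̄₁ ≥ V̄₂ pointwise), the reflection parts are strictly oppositely ordered: k₁⁺(t,x) > k₂⁺(t,x) and k₁⁻(t,x) < k₂⁻(t,x) for all (t,x) ∈ [0,1]×ℝ. -/

import Mathlib

/-- Example (ii) of Remark 5.1: the first solution. -/
noncomputable def W₁ (t x : ℝ) : ℝ := Real.exp (3 - 3 * t) * (1 + x ^ 2)⁻¹

/-- The first lower reflection part. -/
noncomputable def K₁p (t x : ℝ) : ℝ :=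
  Real.exp (3 - 3 * t) * (3 * x ^ 4 + 5) * ((1 + x ^ 2) ^ 3)⁻¹

/-- The first upper reflection part. -/
noncomputable def K₁m (_t _x : ℝ) : ℝ := 0

/-- The first lower obstacle. -/
noncomputable def Low₁ (t x : ℝ) : ℝ := Real.exp (3 - 3 * t) * (1 + x ^ 2)⁻¹

/-- The first upper obstacle. -/
noncomputable def Up₁ (_t x : ℝ) : ℝ := Real.exp 4 * (1 + x ^ 2)⁻¹

/-- The second solution. -/
noncomputable def W₂ (t x : ℝ) : ℝ := Real.exp (3 * t - 3) * (1 + x ^ 2)⁻¹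

/-- The second lower reflection part. -/
noncomputable def K₂p (_t _x : ℝ) : ℝ := 0

/-- The second upper reflection part. -/
noncomputable def K₂m (t x : ℝ) : ℝ :=
  Real.exp (3 * t - 3) * (3 * x ^ 4 + 12 * x ^ 2 + 1) * ((1 + x ^ 2) ^ 3)⁻¹

/-- The second lower obstacle. -/
noncomputable def Low₂ (_t _x : ℝ) : ℝ := 0

/-- The second upper obstacle. -/
noncomputable def Up₂ (t x : ℝ) : ℝ := Real.exp (3 * t - 3) * (1 + x ^ 2)⁻¹

/-! Both solutions are `e^{g(t)} u(x)` with `u = (1 + x²)⁻¹` and `g' = ∓3`, so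
`∂ₜW + ∂ₓₓW = e^{g} (g' u + u'')` with `u'' = (6x² - 2)/(1 + x²)³`. For `g' = -3` this is
`-e^{g} (3x⁴ + 5)/(1 + x²)³ < 0`, which the lower reflection `K₁p` compensates; for `g' = 3` it is
`e^{g} (3x⁴ + 12x² + 1)/(1 + x²)³ > 0`, compensated by the upper reflection `K₂m`. -/

lemma hasDerivAt_one_add_sq (x : ℝ) : HasDerivAt (fun y : ℝ => 1 + y ^ 2) (2 * x) x := by
  simpa using (hasDerivAt_pow 2 x).const_add 1

lemma deriv_inv_one_add_sq :
    (deriv fun y : ℝ => (1 + y ^ 2)⁻¹) = fun x => -(2 * x) / (1 + x ^ 2) ^ 2 :=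
  funext fun x => ((hasDerivAt_one_add_sq x).inv (by positivity)).deriv

lemma deriv_deriv_inv_one_add_sq (x : ℝ) :
    deriv (deriv fun y : ℝ => (1 + y ^ 2)⁻¹) x = (6 * x ^ 2 - 2) / (1 + x ^ 2) ^ 3 := by
  rw [deriv_inv_one_add_sq]
  have hnum : HasDerivAt (fun y : ℝ => -(2 * y)) (-2) x := by
    simpa using ((hasDerivAt_id x).const_mul (2 : ℝ)).fun_neg
  have hden := (hasDerivAt_one_add_sq x).fun_pow 2
  rw [(hnum.fun_div hden (by positivity)).deriv]
  field_simp
  ring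

lemma deriv_deriv_const_mul_inv_one_add_sq (c x : ℝ) :
    deriv (deriv fun y : ℝ => c * (1 + y ^ 2)⁻¹) x = c * ((6 * x ^ 2 - 2) / (1 + x ^ 2) ^ 3) := by
  rw [deriv_const_mul_field', deriv_const_mul_field, deriv_deriv_inv_one_add_sq]

lemma hasDerivAt_W₁_time (t x : ℝ) : HasDerivAt (fun s => W₁ s x) (-3 * W₁ t x) t := by
  have hg : HasDerivAt (fun s : ℝ => 3 - 3 * s) (-3) t := by
    simpa using ((hasDerivAt_id t).const_mul (3 : ℝ)).const_sub 3
  exact (hg.exp.mul_const (1 + x ^ 2)⁻¹).congr_deriv (by unfold W₁; ring)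

lemma hasDerivAt_W₂_time (t x : ℝ) : HasDerivAt (fun s => W₂ s x) (3 * W₂ t x) t := by
  have hg : HasDerivAt (fun s : ℝ => 3 * s - 3) 3 t := by
    simpa using ((hasDerivAt_id t).const_mul (3 : ℝ)).sub_const 3
  exact (hg.exp.mul_const (1 + x ^ 2)⁻¹).congr_deriv (by unfold W₂; ring)

lemma W₁_heat_eq (t x : ℝ) :
    deriv (fun s => W₁ s x) t + deriv (deriv (fun y => W₁ t y)) x + K₁p t x = 0 := by
  rw [(hasDerivAt_W₁_time t x).deriv]
  simp only [W₁, K₁p, deriv_deriv_const_mul_inv_one_add_sq]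
  field_simp
  ring

lemma W₂_heat_eq (t x : ℝ) :
    deriv (fun s => W₂ s x) t + deriv (deriv (fun y => W₂ t y)) x - K₂m t x = 0 := by
  rw [(hasDerivAt_W₂_time t x).deriv]
  simp only [W₂, K₂m, deriv_deriv_const_mul_inv_one_add_sq]
  field_simp
  ring

lemma K₁p_pos (t x : ℝ) : 0 < K₁p t x := by
  unfold K₁p
  positivity

lemma K₂m_pos (t x : ℝ) : 0 < K₂m t x := by
  unfold K₂m
  positivity

lemma exp_mul_inv_one_add_sq_le_exp_four {a : ℝ} (ha : a ≤ 4) (x : ℝ) :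
    Real.exp a * (1 + x ^ 2)⁻¹ ≤ Real.exp 4 * (1 + x ^ 2)⁻¹ := by
  gcongr

lemma W₁_le_Up₁ {t : ℝ} (ht : 0 ≤ t) (x : ℝ) : W₁ t x ≤ Up₁ t x :=
  exp_mul_inv_one_add_sq_le_exp_four (by linarith) x

lemma Up₂_le_Up₁ {t : ℝ} (ht : t ≤ 1) (x : ℝ) : Up₂ t x ≤ Up₁ t x :=
  exp_mul_inv_one_add_sq_le_exp_four (by linarith) x

lemma W₁_one_eq_W₂_one (x : ℝ) : W₁ 1 x = W₂ 1 x := by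
  norm_num [W₁, W₂]

theorem stmt_18 : ∀ t ∈ Set.Icc (0 : ℝ) 1, ∀ x : ℝ,
    deriv (fun s => W₁ s x) t + deriv (deriv (fun y => W₁ t y)) x + K₁p t x = 0 ∧
    deriv (fun s => W₂ s x) t + deriv (deriv (fun y => W₂ t y)) x - K₂m t x = 0 ∧
    Low₁ t x ≤ W₁ t x ∧ W₁ t x ≤ Up₁ t x ∧
    Low₂ t x ≤ W₂ t x ∧ W₂ t x ≤ Up₂ t x ∧
    0 ≤ K₁p t x ∧ 0 ≤ K₂m t x ∧
    (W₁ t x - Low₁ t x) * K₁p t x = 0 ∧ (Up₁ t x - W₁ t x) * K₁m t x = 0 ∧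
    (W₂ t x - Low₂ t x) * K₂p t x = 0 ∧ (Up₂ t x - W₂ t x) * K₂m t x = 0 ∧
    W₁ 1 x ≥ W₂ 1 x ∧ Low₁ t x ≥ Low₂ t x ∧ Up₁ t x ≥ Up₂ t x ∧
    K₁p t x > K₂p t x ∧ K₁m t x < K₂m t x := by
  rintro t ⟨ht0, ht1⟩ x
  have hLow₁ : Low₁ t x = W₁ t x := rfl
  have hUp₂ : Up₂ t x = W₂ t x := rfl
  have hW₂ : 0 < W₂ t x := by unfold W₂; positivity
  refine ⟨W₁_heat_eq t x, W₂_heat_eq t x, le_rfl, W₁_le_Up₁ ht0 x, hW₂.le, le_rfl,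
    (K₁p_pos t x).le, (K₂m_pos t x).le, ?_, mul_zero _, mul_zero _, ?_,
    (W₁_one_eq_W₂_one x).ge, ?_, Up₂_le_Up₁ ht1 x, K₁p_pos t x, K₂m_pos t x⟩
  · rw [hLow₁, sub_self, zero_mul]
  · rw [hUp₂, sub_self, zero_mul]
  · unfold Low₁ Low₂
    positivity
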